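/- (Validity of the MILP reformulation F) The optimal value of the min-max regret problem equals the optimal value of the reformulation F: min_{x∈Ω} R_x = inf { Σ_i u_i x_i − ρ : x ∈ Ω, ρ ∈ ℝ, and ρ ≤ Σ_i (l_i + (u_i − l_i) x_i) ȳ_i for all ȳ ∈ Ω }, and the infimum on the right-hand side is attained; moreover, x* ∈ Ω is robust if and only if there exists ρ* ∈ ℝ such that (x*, ρ*) attains this infimum. -/

import Mathlib

open Finset

noncomputable section

/-- The cost of a 0-1 vector `x` in a scenario `s`: `∑ i, s i * x i`. -/
def cost {n : ℕ} (s x : Fin n → ℝ) : ℝ := ∑ i, s i * x i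

/-- `x` is a binary (0-1) vector. -/
def IsBinary {n : ℕ} (x : Fin n → ℝ) : Prop := ∀ i, x i = 0 ∨ x i = 1

/-- The set of scenarios determined by the interval costs `[l i, u i]`. -/
def Scen {n : ℕ} (l u : Fin n → ℝ) : Set (Fin n → ℝ) :=
  {s | ∀ i, l i ≤ s i ∧ s i ≤ u i}

/-- The scenario `s(x)` induced by `x`: `u i` if `x i = 1`, `l i` otherwise. -/
def inducedScen {n : ℕ} (l u x : Fin n → ℝ) : Fin n → ℝ :=
  fun i => if x i = 1 then u i else l i

/-- The regret of `x` in scenario `s`: `c^s x - min_{y ∈ Ω} c^s y`. -/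
def regret {n : ℕ} (Ω : Finset (Fin n → ℝ)) (hΩ : Ω.Nonempty) (s x : Fin n → ℝ) : ℝ :=
  cost s x - Ω.inf' hΩ fun y => cost s y

/-- The robustness cost of `x`: the supremum of its regret over all scenarios. -/
def robCost {n : ℕ} (l u : Fin n → ℝ) (Ω : Finset (Fin n → ℝ)) (hΩ : Ω.Nonempty)
    (x : Fin n → ℝ) : ℝ :=
  sSup ((fun s => regret Ω hΩ s x) '' Scen l u)

/-- The `Γ`-relaxed robustness cost of `x`:
`c^{s(x)} x - min_{y ∈ Γ} c^{s(x)} y`. -/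
def relRobCost {n : ℕ} (l u : Fin n → ℝ) (Γ : Finset (Fin n → ℝ)) (hΓ : Γ.Nonempty)
    (x : Fin n → ℝ) : ℝ :=
  cost (inducedScen l u x) x - Γ.inf' hΓ fun y => cost (inducedScen l u x) y

/-- Feasible set of the MILP reformulation `F`: pairs `(x, ρ)` with `x ∈ Ω` and
`ρ ≤ ∑ i, (l i + (u i - l i) * x i) * ȳ i` for all `ȳ ∈ Ω`. -/
def FeasF {n : ℕ} (l u : Fin n → ℝ) (Ω : Finset (Fin n → ℝ)) :
    Set ((Fin n → ℝ) × ℝ) :=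
  {p | p.1 ∈ Ω ∧ ∀ yb ∈ Ω, p.2 ≤ ∑ i, (l i + (u i - l i) * p.1 i) * yb i}

/-- Objective of the MILP reformulation `F`: `∑ i, u i * x i - ρ`. -/
def objF {n : ℕ} (u : Fin n → ℝ) (p : (Fin n → ℝ) × ℝ) : ℝ :=
  (∑ i, u i * p.1 i) - p.2

/-! For a binary `x`, the regret of `x` is maximised in its induced scenario `s(x)`: raising a cost
coordinate used by `x` to `u i`, or lowering one not used by `x` to `l i`, can only increase
`c^s x - c^s y`. Hence `R_x = ∑ u i x i - min_{y ∈ Ω} c^{s(x)} y`, and the constraints of `F` say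
exactly that `ρ ≤ min_{y ∈ Ω} c^{s(x)} y`, the optimal choice of `ρ` for fixed `x`. -/

section

variable {n : ℕ} {l u x : Fin n → ℝ}

lemma inducedScen_apply_of_isBinary (hx : IsBinary x) (i : Fin n) :
    inducedScen l u x i = l i + (u i - l i) * x i := by
  rcases hx i with h | h <;> simp [inducedScen, h]

lemma cost_inducedScen_of_isBinary (hx : IsBinary x) (y : Fin n → ℝ) :
    cost (inducedScen l u x) y = ∑ i, (l i + (u i - l i) * x i) * y i :=
  Finset.sum_congr rfl fun i _ => by rw [inducedScen_apply_of_isBinary hx]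

lemma cost_inducedScen_self (hx : IsBinary x) :
    cost (inducedScen l u x) x = ∑ i, u i * x i :=
  Finset.sum_congr rfl fun i _ => by rcases hx i with h | h <;> simp [inducedScen, h]

lemma inducedScen_mem_scen (hlu : ∀ i, l i ≤ u i) : inducedScen l u x ∈ Scen l u := by
  intro i
  by_cases h : x i = 1 <;> simp [inducedScen, h, hlu i]

lemma cost_sub_cost_le_of_mem_scen {s y : Fin n → ℝ} (hx : IsBinary x) (hy : IsBinary y)
    (hs : s ∈ Scen l u) :
    cost s x - cost s y ≤ cost (inducedScen l u x) x - cost (inducedScen l u x) y := by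
  simp only [cost, ← Finset.sum_sub_distrib]
  refine Finset.sum_le_sum fun i _ => ?_
  obtain ⟨hls, hsu⟩ := hs i
  rcases hx i with h | h <;> rcases hy i with h' | h' <;> simp [inducedScen, h, h'] <;> linarith

variable {Ω : Finset (Fin n → ℝ)} (hΩ : Ω.Nonempty) (hbin : ∀ x ∈ Ω, IsBinary x)
include hbin

lemma mem_feasF_iff {p : (Fin n → ℝ) × ℝ} :
    p ∈ FeasF l u Ω ↔ p.1 ∈ Ω ∧ p.2 ≤ Ω.inf' hΩ (cost (inducedScen l u p.1)) := by
  refine and_congr_right fun hp => ?_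
  simp only [Finset.le_inf'_iff, cost_inducedScen_of_isBinary (hbin _ hp)]

variable (hlu : ∀ i, l i ≤ u i)
include hlu

lemma robCost_eq_regret_inducedScen (hx : IsBinary x) :
    robCost l u Ω hΩ x = regret Ω hΩ (inducedScen l u x) x := by
  refine IsGreatest.csSup_eq ⟨⟨_, inducedScen_mem_scen hlu, rfl⟩, ?_⟩
  rintro _ ⟨s, hs, rfl⟩
  obtain ⟨y, hyΩ, hy⟩ := Ω.exists_mem_eq_inf' hΩ (cost s)
  have hmin : Ω.inf' hΩ (cost (inducedScen l u x)) ≤ cost (inducedScen l u x) y :=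
    Finset.inf'_le _ hyΩ
  have hgap := cost_sub_cost_le_of_mem_scen hx (hbin y hyΩ) hs
  simp only [regret, hy]
  linarith

lemma robCost_le_objF {p : (Fin n → ℝ) × ℝ} (hp : p ∈ FeasF l u Ω) :
    robCost l u Ω hΩ p.1 ≤ objF u p := by
  obtain ⟨hpΩ, hρ⟩ := (mem_feasF_iff hΩ hbin).1 hp
  rw [robCost_eq_regret_inducedScen hΩ hbin hlu (hbin _ hpΩ), regret, objF,
    ← cost_inducedScen_self (hbin _ hpΩ)]
  linarith

lemma mem_feasF_and_objF_eq_robCost (hx : x ∈ Ω) :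
    (x, Ω.inf' hΩ (cost (inducedScen l u x))) ∈ FeasF l u Ω ∧
      objF u (x, Ω.inf' hΩ (cost (inducedScen l u x))) = robCost l u Ω hΩ x := by
  refine ⟨(mem_feasF_iff hΩ hbin).2 ⟨hx, le_rfl⟩, ?_⟩
  rw [robCost_eq_regret_inducedScen hΩ hbin hlu (hbin _ hx), regret, objF,
    ← cost_inducedScen_self (hbin _ hx)]

lemma isLeast_objF_image :
    IsLeast (objF u '' FeasF l u Ω) (Ω.inf' hΩ (robCost l u Ω hΩ)) := by
  obtain ⟨x, hx, hxmin⟩ := Ω.exists_mem_eq_inf' hΩ (robCost l u Ω hΩ)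
  obtain ⟨hfeas, hobj⟩ := mem_feasF_and_objF_eq_robCost hΩ hbin hlu hx
  refine ⟨⟨_, hfeas, hobj.trans hxmin.symm⟩, ?_⟩
  rintro _ ⟨p, hp, rfl⟩
  exact (Finset.inf'_le _ ((mem_feasF_iff hΩ hbin).1 hp).1).trans
    (robCost_le_objF hΩ hbin hlu hp)

end

theorem milp_reformulation_valid_general
    {n : ℕ} (l u : Fin n → ℝ)
    (hlu : ∀ i, l i ≤ u i)
    (Ω : Finset (Fin n → ℝ)) (hΩ : Ω.Nonempty) (hbin : ∀ x ∈ Ω, IsBinary x) :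
    (Ω.inf' hΩ (fun x => robCost l u Ω hΩ x) = sInf (objF u '' FeasF l u Ω)) ∧
    (∃ p ∈ FeasF l u Ω, objF u p = sInf (objF u '' FeasF l u Ω)) ∧
    (∀ xstar ∈ Ω,
      ((∀ x ∈ Ω, robCost l u Ω hΩ xstar ≤ robCost l u Ω hΩ x) ↔
        ∃ ρstar : ℝ, (xstar, ρstar) ∈ FeasF l u Ω ∧
          objF u (xstar, ρstar) = sInf (objF u '' FeasF l u Ω))) := by
  have hleast := isLeast_objF_image hΩ hbin hlu
  rw [hleast.csInf_eq]
  refine ⟨rfl, hleast.1, fun xstar hxstar => ?_⟩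
  rw [← Finset.le_inf'_iff hΩ]
  constructor
  · intro hrob
    obtain ⟨hfeas, hobj⟩ := mem_feasF_and_objF_eq_robCost hΩ hbin hlu hxstar
    exact ⟨_, hfeas, hobj.trans (hrob.antisymm (Finset.inf'_le _ hxstar))⟩
  · rintro ⟨ρ, hfeas, hobj⟩
    exact hobj ▸ robCost_le_objF hΩ hbin hlu hfeas

/-- validity of the MILP reformulation `F`:
`min_{x ∈ Ω} R_x = inf { ∑ i, u i * x i - ρ : (x, ρ) feasible for F }`, the
infimum is attained, and `x*` is robust iff some `(x*, ρ*)` attains it. -/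
theorem milp_reformulation_valid
    {n : ℕ} (hn : 0 < n) (l u : Fin n → ℝ)
    (hl : ∀ i, 0 ≤ l i) (hlu : ∀ i, l i ≤ u i)
    (Ω : Finset (Fin n → ℝ)) (hΩ : Ω.Nonempty) (hbin : ∀ x ∈ Ω, IsBinary x) :
    (Ω.inf' hΩ (fun x => robCost l u Ω hΩ x) = sInf (objF u '' FeasF l u Ω)) ∧
    (∃ p ∈ FeasF l u Ω, objF u p = sInf (objF u '' FeasF l u Ω)) ∧
    (∀ xstar ∈ Ω,
      ((∀ x ∈ Ω, robCost l u Ω hΩ xstar ≤ robCost l u Ω hΩ x) ↔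
        ∃ ρstar : ℝ, (xstar, ρstar) ∈ FeasF l u Ω ∧
          objF u (xstar, ρstar) = sInf (objF u '' FeasF l u Ω))) :=
  milp_reformulation_valid_general l u hlu Ω hΩ hbin
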